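/- Let T : X → X be a continuous map of a compact metric space, φ : X → ℝ continuous, and ε > 0. If there exist a sequence of integers n_i → ∞ and points x_i ∈ X with (1/n_i) Σ_{k=0}^{n_i-1} φ(T^k(x_i)) ≥ ε for every i, then there exists a point x ∈ X such that the Birkhoff average lim_{n→∞} (1/n) Σ_{k=0}^{n-1} φ(T^k(x)) exists and is ≥ ε. -/

import Mathlib

/-!
The maximal Birkhoff sums `M n = max_x S_n φ(x)` are subadditive, so `M n / n` converges to some
`α` by Fekete's lemma, and `α ≥ ε` because `M (n i) / n i ≥ ε`. It suffices to find a point `z`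
with `S_m φ(z) ≥ m α` for every `m`: then `α ≤ S_m φ(z) / m ≤ M m / m` squeezes the averages of
`z` to `α`. If for some `β < α` every point had a time `m` with `S_m φ(x) < m β`, compactness
would bound these times by some `N`, and cutting any orbit segment at such times would give
`S_n φ ≤ n β + C` uniformly, contradicting `M n / n → α`. Hence the closed sets
`{x | ∀ m, m β ≤ S_m φ(x)}`, `β < α`, are nonempty and nested, and compactness yields a common
point.
-/

open Filter Topology

section BirkhoffSumBounds

variable {α : Type*} {T : α → α} {φ : α → ℝ}

theorem birkhoffSum_le_mul_of_le {B : ℝ} (hB : ∀ x, φ x ≤ B) (n : ℕ) (x : α) :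
    birkhoffSum T φ n x ≤ n * B := by
  simpa [birkhoffSum] using Finset.sum_le_sum fun k (_ : k ∈ Finset.range n) => hB (T^[k] x)

theorem mul_le_birkhoffSum_of_le {c : ℝ} (hc : ∀ x, c ≤ φ x) (n : ℕ) (x : α) :
    n * c ≤ birkhoffSum T φ n x := by
  simpa [birkhoffSum] using Finset.sum_le_sum fun k (_ : k ∈ Finset.range n) => hc (T^[k] x)

theorem birkhoffSum_le_of_forall_exists_le {B β : ℝ} {N : ℕ} (hB : ∀ x, φ x ≤ B)
    (hstop : ∀ x, ∃ m ∈ Finset.Icc 1 N, birkhoffSum T φ m x ≤ m * β) (n : ℕ) (x : α) :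
    birkhoffSum T φ n x ≤ n * β + N * |B - β| := by
  induction n using Nat.strong_induction_on generalizing x with
  | _ n ih =>
    by_cases hnN : n ≤ N
    · have hn : (n : ℝ) ≤ N := by exact_mod_cast hnN
      calc birkhoffSum T φ n x ≤ n * B := birkhoffSum_le_mul_of_le hB n x
        _ = n * β + n * (B - β) := by ring
        _ ≤ n * β + n * |B - β| := by gcongr; exact le_abs_self _
        _ ≤ n * β + N * |B - β| := by gcongr
    · obtain ⟨m, hm, hmx⟩ := hstop x
      rw [Finset.mem_Icc] at hm
      obtain ⟨r, rfl⟩ : ∃ r, n = m + r := ⟨n - m, by omega⟩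
      have hr := ih r (by omega) (T^[m] x)
      rw [birkhoffSum_add]
      push_cast
      linarith

end BirkhoffSumBounds

section Continuous

variable {X : Type*} [TopologicalSpace X] {T : X → X} {φ : X → ℝ}

theorem Continuous.birkhoffSum (hT : Continuous T) (hφ : Continuous φ) (n : ℕ) :
    Continuous (birkhoffSum T φ n) :=
  continuous_finsetSum _ fun k _ => hφ.comp (hT.iterate k)

end Continuous

section MaxBirkhoffSum

noncomputable def maxBirkhoffSum {X : Type*} (T : X → X) (φ : X → ℝ) (n : ℕ) : ℝ :=
  ⨆ x, birkhoffSum T φ n x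

variable {X : Type*} [TopologicalSpace X] [CompactSpace X] {T : X → X} {φ : X → ℝ}

theorem birkhoffSum_le_maxBirkhoffSum (hT : Continuous T) (hφ : Continuous φ) (n : ℕ) (x : X) :
    birkhoffSum T φ n x ≤ maxBirkhoffSum T φ n :=
  le_ciSup (isCompact_range (hT.birkhoffSum hφ n)).bddAbove x

theorem birkhoffAverage_le_maxBirkhoffSum_div (hT : Continuous T) (hφ : Continuous φ) (n : ℕ)
    (x : X) : birkhoffAverage ℝ T φ n x ≤ maxBirkhoffSum T φ n / n := by
  rw [birkhoffAverage, smul_eq_mul, div_eq_inv_mul]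
  exact mul_le_mul_of_nonneg_left (birkhoffSum_le_maxBirkhoffSum hT hφ n x) (by positivity)

theorem exists_forall_birkhoffSum_le_add (hT : Continuous T) (hφ : Continuous φ) {β : ℝ}
    (h : ∀ x, ∃ m, birkhoffSum T φ m x < m * β) :
    ∃ C, ∀ n x, birkhoffSum T φ n x ≤ n * β + C := by
  let U : ℕ → Set X := fun N => ⋃ m ∈ Finset.Icc 1 N, {x | birkhoffSum T φ m x < m * β}
  have hU_open : ∀ N, IsOpen (U N) := fun N =>
    isOpen_biUnion fun m _ => isOpen_lt (hT.birkhoffSum hφ m) continuous_const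
  have hU_cover : Set.univ ⊆ ⋃ N, U N := by
    intro x _
    obtain ⟨m, hm⟩ := h x
    have hm0 : m ≠ 0 := by rintro rfl; simp at hm
    exact Set.mem_iUnion.2 ⟨m, Set.mem_biUnion (Finset.mem_Icc.2 ⟨by omega, le_rfl⟩) hm⟩
  have hU_mono : Monotone U := fun N N' hN =>
    Set.biUnion_subset_biUnion_left (Finset.coe_subset.2 (Finset.Icc_subset_Icc_right hN))
  obtain ⟨N, hN⟩ := isCompact_univ.elim_directed_cover U hU_open hU_cover hU_mono.directed_le
  obtain ⟨B, hB⟩ := (isCompact_range hφ).bddAbove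
  refine ⟨N * |B - β|, birkhoffSum_le_of_forall_exists_le (fun y => hB ⟨y, rfl⟩) fun x => ?_⟩
  obtain ⟨m, hm, hmx⟩ := Set.mem_iUnion₂.1 (hN (Set.mem_univ x))
  exact ⟨m, hm, le_of_lt hmx⟩

theorem tendsto_birkhoffAverage_of_forall_mul_le (hT : Continuous T) (hφ : Continuous φ)
    {α : ℝ} (hα : Tendsto (fun n => maxBirkhoffSum T φ n / n) atTop (𝓝 α)) {x : X}
    (hx : ∀ m : ℕ, m * α ≤ birkhoffSum T φ m x) :
    Tendsto (birkhoffAverage ℝ T φ · x) atTop (𝓝 α) := by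
  refine tendsto_of_tendsto_of_tendsto_of_le_of_le' tendsto_const_nhds hα ?_
    (Eventually.of_forall fun n => birkhoffAverage_le_maxBirkhoffSum_div hT hφ n x)
  filter_upwards [eventually_gt_atTop 0] with n hn
  rw [birkhoffAverage, smul_eq_mul, ← div_eq_inv_mul, le_div_iff₀ (by exact_mod_cast hn),
    mul_comm]
  exact hx n

variable [Nonempty X]

theorem subadditive_maxBirkhoffSum (hT : Continuous T) (hφ : Continuous φ) :
    Subadditive (maxBirkhoffSum T φ) := fun m n =>
  ciSup_le fun x => by
    rw [birkhoffSum_add]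
    exact add_le_add (birkhoffSum_le_maxBirkhoffSum hT hφ m x)
      (birkhoffSum_le_maxBirkhoffSum hT hφ n _)

theorem exists_tendsto_maxBirkhoffSum_div (hT : Continuous T) (hφ : Continuous φ) :
    ∃ α, Tendsto (fun n => maxBirkhoffSum T φ n / n) atTop (𝓝 α) := by
  obtain ⟨c, hc⟩ := (isCompact_range hφ).bddBelow
  have hbdd : BddBelow (Set.range fun n => maxBirkhoffSum T φ n / n) := by
    refine ⟨min c 0, ?_⟩
    rintro _ ⟨n, rfl⟩
    rcases n.eq_zero_or_pos with rfl | hn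
    · simp
    · obtain ⟨x⟩ := ‹Nonempty X›
      rw [le_div_iff₀ (by exact_mod_cast hn)]
      calc min c 0 * n ≤ n * c := by rw [mul_comm]; gcongr; exact min_le_left _ _
        _ ≤ birkhoffSum T φ n x := mul_le_birkhoffSum_of_le (fun y => hc ⟨y, rfl⟩) n x
        _ ≤ maxBirkhoffSum T φ n := birkhoffSum_le_maxBirkhoffSum hT hφ n x
  exact ⟨_, (subadditive_maxBirkhoffSum hT hφ).tendsto_lim hbdd⟩

theorem exists_forall_mul_le_birkhoffSum_of_lt (hT : Continuous T) (hφ : Continuous φ) {α β : ℝ}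
    (hα : Tendsto (fun n => maxBirkhoffSum T φ n / n) atTop (𝓝 α)) (hβ : β < α) :
    ∃ x, ∀ m : ℕ, m * β ≤ birkhoffSum T φ m x := by
  by_contra! h
  obtain ⟨C, hC⟩ := exists_forall_birkhoffSum_le_add hT hφ h
  have hupper : ∀ᶠ n : ℕ in atTop, maxBirkhoffSum T φ n / n ≤ β + C / n := by
    filter_upwards [eventually_gt_atTop 0] with n hn
    rw [div_le_iff₀ (by exact_mod_cast hn), add_mul, div_mul_cancel₀ _ (by positivity), mul_comm]
    exact ciSup_le (hC n)
  have hlim : Tendsto (fun n : ℕ => β + C / n) atTop (𝓝 β) := by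
    simpa using tendsto_const_nhds.add (tendsto_const_div_atTop_nhds_zero_nat C)
  exact hβ.not_ge (le_of_tendsto_of_tendsto hα hlim hupper)

theorem exists_forall_mul_le_birkhoffSum (hT : Continuous T) (hφ : Continuous φ) {α : ℝ}
    (hα : Tendsto (fun n => maxBirkhoffSum T φ n / n) atTop (𝓝 α)) :
    ∃ x, ∀ m : ℕ, m * α ≤ birkhoffSum T φ m x := by
  let K : Set.Iio α → Set X := fun β => {x | ∀ m : ℕ, m * (β : ℝ) ≤ birkhoffSum T φ m x}
  have hK_closed : ∀ β, IsClosed (K β) := fun β => by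
    simp only [K, Set.ofPred_forall]
    exact isClosed_iInter fun m => isClosed_le continuous_const (hT.birkhoffSum hφ m)
  have hK_directed : Directed (· ⊇ ·) K := directed_of_isDirected_le fun β β' hββ' x hx m =>
    (mul_le_mul_of_nonneg_left (Subtype.coe_le_coe.2 hββ') (Nat.cast_nonneg m)).trans (hx m)
  have : Nonempty (Set.Iio α) := ⟨⟨α - 1, sub_one_lt α⟩⟩
  obtain ⟨x, hx⟩ := IsCompact.nonempty_iInter_of_directed_nonempty_isCompact_isClosed K
    hK_directed (fun β => exists_forall_mul_le_birkhoffSum_of_lt hT hφ hα β.2)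
    (fun β => (hK_closed β).isCompact) hK_closed
  refine ⟨x, fun m => le_of_tendsto (x := 𝓝[<] α) ?_ (eventually_nhdsWithin_of_forall
    fun β hβ => Set.mem_iInter.1 hx ⟨β, hβ⟩ m)⟩
  exact ((continuous_const_mul (m : ℝ)).tendsto α).mono_left nhdsWithin_le_nhds

end MaxBirkhoffSum

theorem exists_orbit_birkhoff_average_ge_general
    {X : Type*} [MetricSpace X] [CompactSpace X]
    (T : X → X) (hT : Continuous T)
    (φ : X → ℝ) (hφ : Continuous φ) (ε : ℝ)
    (n : ℕ → ℕ) (hn : Tendsto n atTop atTop) (x : ℕ → X)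
    (hbig : ∀ i : ℕ,
      ε ≤ (n i : ℝ)⁻¹ * ∑ k ∈ Finset.range (n i), φ (T^[k] (x i))) :
    ∃ (z : X) (L : ℝ),
      Tendsto (fun m : ℕ => (m : ℝ)⁻¹ * ∑ k ∈ Finset.range m, φ (T^[k] z))
        atTop (nhds L) ∧ ε ≤ L := by
  have : Nonempty X := ⟨x 0⟩
  obtain ⟨α, hα⟩ := exists_tendsto_maxBirkhoffSum_div hT hφ
  obtain ⟨z, hz⟩ := exists_forall_mul_le_birkhoffSum hT hφ hα
  refine ⟨z, α, tendsto_birkhoffAverage_of_forall_mul_le hT hφ hα hz, ?_⟩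
  exact ge_of_tendsto (hα.comp hn) (Eventually.of_forall fun i =>
    (hbig i).trans (birkhoffAverage_le_maxBirkhoffSum_div hT hφ (n i) (x i)))

/-- If finite-time Birkhoff averages of `φ` along some points are at least `ε` for arbitrarily
large times, then there is a single point whose (infinite-time) Birkhoff average exists and is
at least `ε`. -/
theorem exists_orbit_birkhoff_average_ge
    {X : Type*} [MetricSpace X] [CompactSpace X]
    [MeasurableSpace X] [BorelSpace X]
    (T : X → X) (hT : Continuous T)
    (φ : X → ℝ) (hφ : Continuous φ) (ε : ℝ) (hε : 0 < ε)
    (n : ℕ → ℕ) (hn : Tendsto n atTop atTop) (x : ℕ → X)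
    (hbig : ∀ i : ℕ,
      ε ≤ (n i : ℝ)⁻¹ * ∑ k ∈ Finset.range (n i), φ (T^[k] (x i))) :
    ∃ (z : X) (L : ℝ),
      Tendsto (fun m : ℕ => (m : ℝ)⁻¹ * ∑ k ∈ Finset.range m, φ (T^[k] z))
        atTop (nhds L) ∧ ε ≤ L :=
  exists_orbit_birkhoff_average_ge_general T hT φ hφ ε n hn x hbig
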